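/- For every nonnegative integer r there exists a constant C > 0, depending only on L and r, such that for every f ∈ ℂ^N and every t > 0, K_r(f, t) ≤ C · ω_r(f, t). -/

import Mathlib

open Matrix

noncomputable section

/-- Euclidean (2-)norm on `ℂ^N`. -/
def cnorm2 {N : ℕ} (f : Fin N → ℂ) : ℝ := Real.sqrt (∑ i, ‖f i‖ ^ 2)

/-- The spectral operator `Σ_j c_j u_j u_j^*`. -/
def specOp {N : ℕ} (u : Fin N → Fin N → ℂ) (c : Fin N → ℂ) : Matrix (Fin N) (Fin N) ℂ :=
  ∑ j, c j • Matrix.vecMulVec (u j) (star (u j))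

/-- The graph translation operator `T_s = Σ_j e^{i s √λ_j} u_j u_j^*`. -/
def Tmat {N : ℕ} (u : Fin N → Fin N → ℂ) (lam : Fin N → ℝ) (s : ℝ) :
    Matrix (Fin N) (Fin N) ℂ :=
  specOp u (fun j => Complex.exp (Complex.I * (s : ℂ) * (Real.sqrt (lam j) : ℂ)))

/-- The `r`-th modulus of smoothness `ω_r(f,t) = sup_{|s| ≤ t} ‖(T_s - I)^r f‖₂`. -/
def omegaMod {N : ℕ} (u : Fin N → Fin N → ℂ) (lam : Fin N → ℝ) (r : ℕ) (f : Fin N → ℂ)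
    (t : ℝ) : ℝ :=
  ⨆ s : {s : ℝ // |s| ≤ t}, cnorm2 (((Tmat u lam s.1 - 1) ^ r).mulVec f)

/-- Functional calculus power `L^x = Σ_j λ_j^x u_j u_j^*` (with `0^0 = 1`). -/
def Lpow {N : ℕ} (u : Fin N → Fin N → ℂ) (lam : Fin N → ℝ) (x : ℝ) :
    Matrix (Fin N) (Fin N) ℂ :=
  specOp u (fun j => ((lam j ^ x : ℝ) : ℂ))

/-- The `K`-functional `K_r(f,t) = inf_g ( ‖f-g‖₂ + (t/2)^r ‖L^{r/2} g‖₂ )`. -/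
def Kfun {N : ℕ} (u : Fin N → Fin N → ℂ) (lam : Fin N → ℝ) (r : ℕ) (f : Fin N → ℂ)
    (t : ℝ) : ℝ :=
  ⨅ g : Fin N → ℂ, (cnorm2 (f - g) + (t / 2) ^ r * cnorm2 ((Lpow u lam ((r : ℝ) / 2)).mulVec g))

/-! In the eigenbasis every operator in sight is diagonal, and
`‖(T_s - I)^r f‖² = Σ_j 4^r sin^{2r}(s √λ_j / 2) |⟨u_j, f⟩|²`.
Averaging over `s ∈ [0, t]`, and using that the mean of `sin^{2r}(s a)` over `[0, t]` is at least
a constant times `min(1, t a)^{2r}`, bounds `ω_r(f, t)²` below by a multiple of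
`Q = Σ_j min(1, t √λ_j / 2)^{2r} |⟨u_j, f⟩|²`. On the other hand the spectral cut-off `g` of `f`
to the frequencies with `t √λ_j ≤ 2` makes both terms of the `K`-functional at most `√Q`. -/

section Spectral

variable {N : ℕ} {u : Fin N → Fin N → ℂ}

lemma sum_norm_sq_eq_star_dotProduct {𝕜 ι : Type*} [RCLike 𝕜] [Fintype ι] (v : ι → 𝕜) :
    ((∑ i, ‖v i‖ ^ 2 : ℝ) : 𝕜) = star v ⬝ᵥ v := by
  simp [dotProduct, RCLike.conj_mul]

lemma cnorm2_mulVec_of_mem_unitaryGroup {V : Matrix (Fin N) (Fin N) ℂ}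
    (hV : V ∈ unitaryGroup (Fin N) ℂ) (x : Fin N → ℂ) : cnorm2 (V *ᵥ x) = cnorm2 x := by
  have h : star (V *ᵥ x) ⬝ᵥ (V *ᵥ x) = star x ⬝ᵥ x := by
    rw [star_mulVec, ← dotProduct_mulVec, mulVec_mulVec, ← star_eq_conjTranspose,
      mem_unitaryGroup_iff'.mp hV, one_mulVec]
  rw [← sum_norm_sq_eq_star_dotProduct, ← sum_norm_sq_eq_star_dotProduct] at h
  rw [cnorm2, cnorm2, RCLike.ofReal_inj.mp h]

variable (hu : ∀ i j, star (u i) ⬝ᵥ u j = if i = j then 1 else 0)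
include hu

lemma transpose_of_mem_unitaryGroup : (of u)ᵀ ∈ unitaryGroup (Fin N) ℂ := by
  rw [mem_unitaryGroup_iff']
  ext i j
  simpa [Matrix.mul_apply, dotProduct, Matrix.one_apply] using hu i j

lemma specOp_eq_conjStarAlgAut (c : Fin N → ℂ) :
    specOp u c = Unitary.conjStarAlgAut ℂ _ ⟨_, transpose_of_mem_unitaryGroup hu⟩ (diagonal c) := by
  ext i k
  simp [specOp, Matrix.sum_apply, Matrix.mul_apply, vecMulVec_apply, diagonal_apply, mul_assoc,
    mul_left_comm]

lemma specOp_one : specOp u 1 = 1 := by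
  rw [specOp_eq_conjStarAlgAut hu, Pi.one_def, diagonal_one, map_one]

lemma specOp_mul (c d : Fin N → ℂ) : specOp u (c * d) = specOp u c * specOp u d := by
  simp only [specOp_eq_conjStarAlgAut hu, ← map_mul, diagonal_mul_diagonal', Pi.mul_def]

lemma specOp_sub (c d : Fin N → ℂ) : specOp u (c - d) = specOp u c - specOp u d := by
  simp only [specOp_eq_conjStarAlgAut hu, ← map_sub, diagonal_sub, Pi.sub_def]

lemma specOp_pow (c : Fin N → ℂ) (r : ℕ) : specOp u (c ^ r) = specOp u c ^ r := by
  simp only [specOp_eq_conjStarAlgAut hu, ← map_pow, diagonal_pow]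

lemma cnorm2_specOp_mulVec (c f : Fin N → ℂ) :
    cnorm2 (specOp u c *ᵥ f) = √(∑ j, ‖c j‖ ^ 2 * ‖star (u j) ⬝ᵥ f‖ ^ 2) := by
  rw [specOp_eq_conjStarAlgAut hu, Unitary.conjStarAlgAut_apply, ← mulVec_mulVec,
    ← mulVec_mulVec, cnorm2_mulVec_of_mem_unitaryGroup (transpose_of_mem_unitaryGroup hu), cnorm2]
  congr 1
  refine Finset.sum_congr rfl fun j _ => ?_
  rw [mulVec_diagonal, norm_mul, mul_pow]
  simp [mulVec, dotProduct]

end Spectral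

open Real intervalIntegral

theorem Function.Periodic.integral_mul_div_le_integral {g : ℝ → ℝ} {p a T : ℝ}
    (hg : Function.Periodic g p) (hcont : Continuous g) (hnn : ∀ x, 0 ≤ g x) (hp : 0 < p)
    (ha : 0 ≤ a) (hap : a ≤ p) (haT : a ≤ T) :
    (∫ x in 0..a, g x) * T / (2 * p) ≤ ∫ x in 0..T, g x := by
  have hmono : ∀ x y, 0 ≤ x → x ≤ y → ∫ s in 0..x, g s ≤ ∫ s in 0..y, g s := fun x y hx hxy =>
    integral_mono_interval le_rfl hx hxy (Filter.Eventually.of_forall hnn)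
      (hcont.intervalIntegrable _ _)
  set n := ⌊T / p⌋₊
  have hT : 0 ≤ T := ha.trans haT
  have hnT : n * p ≤ T := (le_div_iff₀ hp).mp (Nat.floor_le (div_nonneg hT hp.le))
  have hTn : T < (n + 1) * p := (div_lt_iff₀ hp).mp (Nat.lt_floor_add_one _)
  have hperiod : ∫ s in 0..n * p, g s = n * ∫ s in 0..p, g s := by
    simpa using hg.intervalIntegral_add_zsmul_eq n 0 fun _ _ => hcont.intervalIntegrable _ _
  have hA : 0 ≤ ∫ s in 0..a, g s := integral_nonneg ha fun x _ => hnn x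
  have hAp := hmono a p ha hap
  have hAT := hmono a T ha haT
  have hnpT := hmono (n * p) T (by positivity) hnT
  calc (∫ x in 0..a, g x) * T / (2 * p)
      ≤ (∫ x in 0..a, g x) * ((n + 1) * p) / (2 * p) := by gcongr
    _ = ((∫ x in 0..a, g x) + n * ∫ x in 0..a, g x) / 2 := by field_simp; ring
    _ ≤ ((∫ x in 0..T, g x) + ∫ x in 0..T, g x) / 2 := by
        gcongr
        exact (mul_le_mul_of_nonneg_left hAp n.cast_nonneg).trans (hperiod ▸ hnpT)
    _ = ∫ x in 0..T, g x := by ring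

lemma mul_pow_le_integral_sin_pow (r : ℕ) {T : ℝ} (h0 : 0 ≤ T) (h1 : T ≤ π / 2) :
    (2 / π) ^ (2 * r) / (2 * r + 1) * T ^ (2 * r + 1) ≤ ∫ x in 0..T, sin x ^ (2 * r) := by
  have hJordan : ∫ x in 0..T, (2 / π * x) ^ (2 * r) ≤ ∫ x in 0..T, sin x ^ (2 * r) :=
    integral_mono_on h0 ((by fun_prop : Continuous _).intervalIntegrable _ _)
      ((by fun_prop : Continuous fun x => sin x ^ (2 * r)).intervalIntegrable _ _) fun x hx =>
      pow_le_pow_left₀ (by have := hx.1; positivity) (mul_le_sin hx.1 (hx.2.trans h1)) _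
  simp only [mul_pow, integral_const_mul, integral_pow] at hJordan
  convert hJordan using 1
  push_cast
  ring

-- `(2/π)^{2r}/(2r+1)` is the Jordan bound `sin x ≥ 2x/π` integrated over `[0, 1]`;
-- the factor `1/(2π)` comes from counting the periods of `sin^{2r}` in `[0, T]`.
def sinPowConst (r : ℕ) : ℝ := (2 / π) ^ (2 * r) / (2 * r + 1) / (2 * π)

lemma sinPowConst_pos (r : ℕ) : 0 < sinPowConst r := by
  unfold sinPowConst; positivity

lemma sinPowConst_le_one (r : ℕ) : sinPowConst r ≤ 1 := by
  have h2π : 1 ≤ 2 * π := by linarith [pi_gt_three]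
  have hpow : (2 / π) ^ (2 * r) ≤ 1 :=
    pow_le_one₀ (by positivity) ((div_le_one pi_pos).mpr (by linarith [pi_gt_three]))
  unfold sinPowConst
  rw [div_div, div_le_one (by positivity)]
  nlinarith [pi_pos]

lemma sinPowConst_mul_le_integral_sin_pow (r : ℕ) {T : ℝ} (hT : 0 ≤ T) :
    sinPowConst r * min 1 T ^ (2 * r) * T ≤ ∫ x in 0..T, sin x ^ (2 * r) := by
  have hπ : 1 ≤ π / 2 := by linarith [pi_gt_three]
  rcases le_total T 1 with hT1 | hT1
  · calc sinPowConst r * min 1 T ^ (2 * r) * T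
        ≤ (2 / π) ^ (2 * r) / (2 * r + 1) * T ^ (2 * r + 1) := by
          rw [min_eq_right hT1, pow_succ, ← mul_assoc]
          gcongr
          exact div_le_self (by positivity) (by linarith [pi_gt_three])
      _ ≤ _ := mul_pow_le_integral_sin_pow r hT (hT1.trans hπ)
  · have hper : Function.Periodic (fun x => sin x ^ (2 * r)) π := fun x => by
      simp only [sin_add_pi, (even_two_mul r).neg_pow]
    have hone := mul_pow_le_integral_sin_pow r zero_le_one hπ
    rw [one_pow, mul_one] at hone
    calc sinPowConst r * min 1 T ^ (2 * r) * T
        = (2 / π) ^ (2 * r) / (2 * r + 1) * T / (2 * π) := by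
          rw [min_eq_left hT1, one_pow, mul_one, sinPowConst]; ring
      _ ≤ (∫ x in 0..1, sin x ^ (2 * r)) * T / (2 * π) := by gcongr
      _ ≤ _ := hper.integral_mul_div_le_integral (by fun_prop)
          (fun x => (even_two_mul r).pow_nonneg _) pi_pos zero_le_one (by linarith) hT1

lemma sinPowConst_mul_le_integral_sin_mul_pow (r : ℕ) {t a : ℝ} (ht : 0 ≤ t) (ha : 0 ≤ a) :
    sinPowConst r * min 1 (t * a) ^ (2 * r) * t ≤ ∫ s in 0..t, sin (s * a) ^ (2 * r) := by
  rcases ha.eq_or_lt with rfl | ha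
  · simp only [mul_zero, sin_zero, integral_const, sub_zero, smul_eq_mul]
    rw [min_eq_right zero_le_one, mul_comm t]
    exact mul_le_mul_of_nonneg_right
      (mul_le_of_le_one_left (pow_nonneg le_rfl _) (sinPowConst_le_one r)) ht
  · rw [integral_comp_mul_right (fun x => sin x ^ (2 * r)) ha.ne', zero_mul, smul_eq_mul,
      le_inv_mul_iff₀ ha]
    calc a * (sinPowConst r * min 1 (t * a) ^ (2 * r) * t)
        = sinPowConst r * min 1 (t * a) ^ (2 * r) * (t * a) := by ring
      _ ≤ _ := sinPowConst_mul_le_integral_sin_pow r (by positivity)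

section Smoothness

variable {N : ℕ} {u : Fin N → Fin N → ℂ} {lam : Fin N → ℝ} {r : ℕ} {f : Fin N → ℂ} {t : ℝ}

lemma cnorm2_nonneg (v : Fin N → ℂ) : 0 ≤ cnorm2 v := Real.sqrt_nonneg _

lemma omegaMod_nonneg : 0 ≤ omegaMod u lam r f t :=
  Real.iSup_nonneg fun _ => cnorm2_nonneg _

lemma Kfun_le (ht : 0 ≤ t) (g : Fin N → ℂ) :
    Kfun u lam r f t ≤ cnorm2 (f - g) + (t / 2) ^ r * cnorm2 (Lpow u lam (r / 2) *ᵥ g) :=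
  ciInf_le ⟨0, by
    rintro _ ⟨g, rfl⟩
    exact add_nonneg (cnorm2_nonneg _) (mul_nonneg (by positivity) (cnorm2_nonneg _))⟩ g

variable (hu : ∀ i j, star (u i) ⬝ᵥ u j = if i = j then 1 else 0)
include hu

lemma cnorm2_eq_sqrt_sum : cnorm2 f = √(∑ j, ‖star (u j) ⬝ᵥ f‖ ^ 2) := by
  simpa [specOp_one hu] using cnorm2_specOp_mulVec hu 1 f

lemma mul_cnorm2_specOp_mulVec_le {c : Fin N → ℂ} {b : Fin N → ℝ} {k : ℝ} (hk : 0 ≤ k)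
    (hcb : ∀ j, k ^ 2 * ‖c j‖ ^ 2 ≤ b j) :
    k * cnorm2 (specOp u c *ᵥ f) ≤ √(∑ j, b j * ‖star (u j) ⬝ᵥ f‖ ^ 2) := by
  rw [cnorm2_specOp_mulVec hu, ← Real.sqrt_sq hk, ← Real.sqrt_mul (sq_nonneg k), Finset.mul_sum]
  refine Real.sqrt_le_sqrt (Finset.sum_le_sum fun j _ => ?_)
  rw [← mul_assoc]
  exact mul_le_mul_of_nonneg_right (hcb j) (sq_nonneg _)

lemma sq_cnorm2_translate_sub_one_pow_mulVec (s : ℝ) :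
    cnorm2 ((Tmat u lam s - 1) ^ r *ᵥ f) ^ 2
      = ∑ j, 4 ^ r * ‖star (u j) ⬝ᵥ f‖ ^ 2 * sin (s * (√(lam j) / 2)) ^ (2 * r) := by
  have hT : (Tmat u lam s - 1) ^ r
      = specOp u (((fun j => Complex.exp (Complex.I * s * √(lam j))) - 1) ^ r) := by
    rw [specOp_pow hu, specOp_sub hu, specOp_one hu]; rfl
  rw [hT, cnorm2_specOp_mulVec hu, Real.sq_sqrt (by positivity)]
  refine Finset.sum_congr rfl fun j _ => ?_
  have hexp : Complex.I * s * √(lam j) = Complex.I * ↑(s * √(lam j)) := by push_cast; ring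
  rw [Pi.pow_apply, Pi.sub_apply, Pi.one_apply, norm_pow, hexp,
    Complex.norm_exp_I_mul_ofReal_sub_one, ← pow_mul, mul_comm r 2, pow_mul, Real.norm_eq_abs,
    sq_abs, mul_div_assoc]
  ring

lemma cnorm2_translate_sub_one_pow_mulVec_le (s : ℝ) :
    cnorm2 ((Tmat u lam s - 1) ^ r *ᵥ f) ≤ 2 ^ r * cnorm2 f := by
  refine (sq_le_sq₀ (cnorm2_nonneg _) (by positivity [cnorm2_nonneg f])).mp ?_
  rw [sq_cnorm2_translate_sub_one_pow_mulVec hu, mul_pow, cnorm2_eq_sqrt_sum hu,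
    Real.sq_sqrt (by positivity), Finset.mul_sum]
  refine Finset.sum_le_sum fun j _ => ?_
  calc 4 ^ r * ‖star (u j) ⬝ᵥ f‖ ^ 2 * sin (s * (√(lam j) / 2)) ^ (2 * r)
      ≤ 4 ^ r * ‖star (u j) ⬝ᵥ f‖ ^ 2 * 1 := by
        gcongr
        rw [pow_mul]
        exact pow_le_one₀ (sq_nonneg _) (Real.sin_sq_le_one _)
    _ = (2 ^ r) ^ 2 * ‖star (u j) ⬝ᵥ f‖ ^ 2 := by
        rw [mul_one, ← pow_mul, mul_comm r 2, pow_mul]; norm_num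

lemma cnorm2_translate_sub_one_pow_mulVec_le_omegaMod {s : ℝ} (hs : |s| ≤ t) :
    cnorm2 ((Tmat u lam s - 1) ^ r *ᵥ f) ≤ omegaMod u lam r f t :=
  le_ciSup (f := fun s : {s : ℝ // |s| ≤ t} => cnorm2 ((Tmat u lam s.1 - 1) ^ r *ᵥ f))
    ⟨2 ^ r * cnorm2 f, by
      rintro _ ⟨s, rfl⟩
      exact cnorm2_translate_sub_one_pow_mulVec_le hu s.1⟩ ⟨s, hs⟩

lemma sinPowConst_mul_sum_le_sq_omegaMod (ht : 0 < t) :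
    sinPowConst r * 4 ^ r * ∑ j, min 1 (t * (√(lam j) / 2)) ^ (2 * r) * ‖star (u j) ⬝ᵥ f‖ ^ 2
      ≤ omegaMod u lam r f t ^ 2 := by
  set G : ℝ → ℝ := fun s =>
    ∑ j, 4 ^ r * ‖star (u j) ⬝ᵥ f‖ ^ 2 * sin (s * (√(lam j) / 2)) ^ (2 * r)
  have hG : ∫ s in 0..t, G s ≤ t * omegaMod u lam r f t ^ 2 := by
    refine (intervalIntegral.integral_mono_on ht.le
      ((by fun_prop : Continuous G).intervalIntegrable _ _) intervalIntegrable_const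
      fun s hs => ?_).trans_eq (by rw [intervalIntegral.integral_const, sub_zero, smul_eq_mul])
    rw [show G s = _ from (sq_cnorm2_translate_sub_one_pow_mulVec hu s).symm]
    exact pow_le_pow_left₀ (cnorm2_nonneg _) (cnorm2_translate_sub_one_pow_mulVec_le_omegaMod hu
      (abs_le.mpr ⟨by linarith [hs.1], hs.2⟩)) 2
  have hGsum : ∫ s in 0..t, G s = ∑ j, 4 ^ r * ‖star (u j) ⬝ᵥ f‖ ^ 2 *
      ∫ s in 0..t, sin (s * (√(lam j) / 2)) ^ (2 * r) := by
    rw [intervalIntegral.integral_finsetSum fun j _ =>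
      (by fun_prop : Continuous _).intervalIntegrable _ _]
    simp only [intervalIntegral.integral_const_mul]
  refine le_of_mul_le_mul_left ?_ ht
  calc t * (sinPowConst r * 4 ^ r *
        ∑ j, min 1 (t * (√(lam j) / 2)) ^ (2 * r) * ‖star (u j) ⬝ᵥ f‖ ^ 2)
      = ∑ j, 4 ^ r * ‖star (u j) ⬝ᵥ f‖ ^ 2 *
          (sinPowConst r * min 1 (t * (√(lam j) / 2)) ^ (2 * r) * t) := by
        rw [Finset.mul_sum, Finset.mul_sum]; congr 1; ext j; ring
    _ ≤ ∫ s in 0..t, G s := by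
        rw [hGsum]
        gcongr with j
        exact sinPowConst_mul_le_integral_sin_mul_pow r ht.le (by positivity)
    _ ≤ t * omegaMod u lam r f t ^ 2 := hG

lemma Kfun_le_two_mul_sqrt (hlam : ∀ j, 0 ≤ lam j) (ht : 0 ≤ t) :
    Kfun u lam r f t
      ≤ 2 * √(∑ j, min 1 (t * (√(lam j) / 2)) ^ (2 * r) * ‖star (u j) ⬝ᵥ f‖ ^ 2) := by
  set χ : Fin N → ℂ := fun j => if t * (√(lam j) / 2) ≤ 1 then 1 else 0
  set g := specOp u χ *ᵥ f
  have hfg : cnorm2 (f - g) ≤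
      √(∑ j, min 1 (t * (√(lam j) / 2)) ^ (2 * r) * ‖star (u j) ⬝ᵥ f‖ ^ 2) := by
    have hsub : f - g = specOp u (1 - χ) *ᵥ f := by
      rw [specOp_sub hu, specOp_one hu, sub_mulVec, one_mulVec]
    rw [hsub, ← one_mul (cnorm2 _)]
    refine mul_cnorm2_specOp_mulVec_le hu zero_le_one fun j => ?_
    by_cases hj : t * (√(lam j) / 2) ≤ 1
    · rw [Pi.sub_apply, Pi.one_apply, show χ j = 1 from if_pos hj, sub_self, norm_zero,
        zero_pow two_ne_zero, mul_zero]
      exact pow_nonneg (le_min zero_le_one (by positivity)) _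
    · rw [Pi.sub_apply, Pi.one_apply, show χ j = 0 from if_neg hj, sub_zero,
        min_eq_left (not_le.mp hj).le]
      simp
  have hLg : (t / 2) ^ r * cnorm2 (Lpow u lam (r / 2) *ᵥ g) ≤
      √(∑ j, min 1 (t * (√(lam j) / 2)) ^ (2 * r) * ‖star (u j) ⬝ᵥ f‖ ^ 2) := by
    rw [mulVec_mulVec, Lpow, ← specOp_mul hu]
    refine mul_cnorm2_specOp_mulVec_le hu (by positivity) fun j => ?_
    by_cases hj : t * (√(lam j) / 2) ≤ 1
    · have hpow : lam j ^ ((r : ℝ) / 2) = √(lam j) ^ r := by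
        rw [Real.sqrt_eq_rpow, ← Real.rpow_natCast, ← Real.rpow_mul (hlam j)]
        ring_nf
      rw [Pi.mul_apply, show χ j = 1 from if_pos hj, mul_one, Complex.norm_real, hpow,
        Real.norm_eq_abs, sq_abs, min_eq_right hj]
      exact le_of_eq (by ring)
    · rw [Pi.mul_apply, show χ j = 0 from if_neg hj, mul_zero, norm_zero,
        zero_pow two_ne_zero, mul_zero]
      exact pow_nonneg (le_min zero_le_one (by positivity)) _
  exact (Kfun_le ht g).trans ((add_le_add hfg hLg).trans_eq (two_mul _).symm)

end Smoothness

/-- For every nonnegative integer `r` there is a constant `C > 0`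
(depending only on `L`, i.e. on the spectral data `(u, λ)`, and on `r`) such that for
every `f ∈ ℂ^N` and every `t > 0`, `K_r(f, t) ≤ C · ω_r(f, t)`. -/
theorem stmt6
    (N : ℕ) (hN : 2 ≤ N)
    (u : Fin N → Fin N → ℂ)
    (hu : ∀ i j, star (u i) ⬝ᵥ u j = if i = j then 1 else 0)
    (lam : Fin N → ℝ) (hmono : Monotone lam)
    (hlam0 : lam ⟨0, by omega⟩ = 0)
    (r : ℕ) :
    ∃ C : ℝ, 0 < C ∧ ∀ (f : Fin N → ℂ) (t : ℝ), 0 < t →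
      Kfun u lam r f t ≤ C * omegaMod u lam r f t := by
  have hlam : ∀ j, 0 ≤ lam j := fun j => hlam0 ▸ hmono (Nat.zero_le j.val)
  have hc := sinPowConst_pos r
  refine ⟨2 / √(sinPowConst r * 4 ^ r), by positivity, fun f t ht => ?_⟩
  set Q := ∑ j, min 1 (t * (√(lam j) / 2)) ^ (2 * r) * ‖star (u j) ⬝ᵥ f‖ ^ 2
  calc Kfun u lam r f t ≤ 2 * √Q := Kfun_le_two_mul_sqrt hu hlam ht.le
    _ = 2 / √(sinPowConst r * 4 ^ r) * √(sinPowConst r * 4 ^ r * Q) := by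
        rw [Real.sqrt_mul (by positivity : 0 ≤ sinPowConst r * 4 ^ r)]; field_simp
    _ ≤ 2 / √(sinPowConst r * 4 ^ r) * omegaMod u lam r f t := by
        gcongr
        exact Real.sqrt_le_iff.mpr ⟨omegaMod_nonneg, sinPowConst_mul_sum_le_sq_omegaMod hu ht⟩
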